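/- arXiv:math/0412161 — 5 statements merged into one kernel-verified Lean document; each statement's English description precedes it below -/
import Mathlib

section
/- Let H be a Hilbert space and G₁,...,G_N bounded operators on H such that for every ζ = (ζ₁,...,ζ_N) in the N-torus (|ζ_k| = 1 for all k), the operator ∑_{k=1}^N ζ_k G_k is unitary. Then ∑_{k=1}^N G_k* G_k = I, and G_k* G_j = 0 for all k ≠ j. -/
open ContinuousLinearMap

noncomputable def rr : Fin 4 → ℂ := ![1, Complex.I, -1, -Complex.I]

lemma rr_norm (x : Fin 4) : ‖rr x‖ = 1 := by
  fin_cases x <;> simp [rr]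

lemma sum_prod4 {M : Type*} [AddCommMonoid M] {α β γ δ : Type*}
    [Fintype α] [Fintype β] [Fintype γ] [Fintype δ] (F : α → β → γ → δ → M) :
    ∑ a, ∑ b, ∑ m, ∑ n, F a b m n
      = ∑ p : α × β, ∑ q : γ × δ, F p.1 p.2 q.1 q.2 := by
  simp only [Fintype.sum_prod_type]

lemma sum_swap4 {M : Type*} [AddCommMonoid M] {α β γ δ : Type*}
    [Fintype α] [Fintype β] [Fintype γ] [Fintype δ] (F : α → β → γ → δ → M) :
    ∑ a, ∑ b, ∑ m, ∑ n, F a b m n = ∑ m, ∑ n, ∑ a, ∑ b, F a b m n := by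
  rw [sum_prod4 F, sum_prod4 (fun m n a b => F a b m n), Finset.sum_comm]

/-- If `∑ ζ_k • G_k` is unitary for every `ζ` in the `N`-torus, then
`∑ G_k* G_k = I` and `G_k* G_j = 0` for `k ≠ j`. -/
theorem stmt0 {H : Type*} [NormedAddCommGroup H] [InnerProductSpace ℂ H]
    [CompleteSpace H] {N : ℕ} (G : Fin N → H →L[ℂ] H)
    (hG : ∀ ζ : Fin N → ℂ, (∀ k, ‖ζ k‖ = 1) →
      (∑ k, ζ k • G k) ∈ unitary (H →L[ℂ] H)) :
    (∑ k, star (G k) * G k = 1) ∧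
      ∀ k j, k ≠ j → star (G k) * G j = 0 := by
  classical
  set T : Fin N → Fin N → (H →L[ℂ] H) := fun m n => star (G m) * G n with hT
  have key : ∀ ζ : Fin N → ℂ, (∀ k, ‖ζ k‖ = 1) →
      ∑ m, ∑ n, ((starRingEnd ℂ) (ζ m) * ζ n) • T m n = 1 := by
    intro ζ hζ
    have h := (hG ζ hζ).1
    calc ∑ m, ∑ n, ((starRingEnd ℂ) (ζ m) * ζ n) • T m n
        = (∑ m, (starRingEnd ℂ) (ζ m) • star (G m)) * (∑ n, ζ n • G n) := by
          rw [Finset.sum_mul_sum]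
          exact Finset.sum_congr rfl fun m _ => Finset.sum_congr rfl fun n _ =>
            (smul_mul_smul_comm _ _ _ _).symm
      _ = star (∑ k, ζ k • G k) * (∑ k, ζ k • G k) := by
          congr 1
          rw [star_sum]
          exact Finset.sum_congr rfl fun m _ => by rw [star_smul]; rfl
      _ = 1 := h
  have offdiag : ∀ k j, k ≠ j → T k j = 0 := by
    intro k j hkj
    set ζ : Fin 4 → Fin 4 → Fin N → ℂ :=
      fun a b m => if m = k then rr a else if m = j then rr b else 1 with hζdef
    have hunit : ∀ a b m, ‖ζ a b m‖ = 1 := by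
      intro a b m
      simp only [hζdef]
      split_ifs
      exacts [rr_norm a, rr_norm b, norm_one]
    have hkey : ∀ a b, ∑ m, ∑ n, ((starRingEnd ℂ) (ζ a b m) * ζ a b n) • T m n = 1 :=
      fun a b => key _ (hunit a b)
    have coeff : ∀ m n, (∑ a : Fin 4, ∑ b : Fin 4,
        (rr a * (starRingEnd ℂ) (rr b)) * ((starRingEnd ℂ) (ζ a b m) * ζ a b n))
        = if m = k ∧ n = j then (16 : ℂ) else 0 := by
      intro m n
      by_cases hmk : m = k <;> by_cases hmj : m = j <;>
        by_cases hnk : n = k <;> by_cases hnj : n = j <;>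
        first
          | exact absurd (hmk.symm.trans hmj) hkj
          | exact absurd (hnk.symm.trans hnj) hkj
          | (simp [hζdef, hmk, hmj, hnk, hnj, hkj, Ne.symm hkj, Fin.sum_univ_four, rr]; try ring_nf)
    have e2 : ∑ a : Fin 4, ∑ b : Fin 4, (rr a * (starRingEnd ℂ) (rr b)) •
        (∑ m, ∑ n, ((starRingEnd ℂ) (ζ a b m) * ζ a b n) • T m n)
        = ∑ m, ∑ n, (∑ a : Fin 4, ∑ b : Fin 4,
            (rr a * (starRingEnd ℂ) (rr b)) * ((starRingEnd ℂ) (ζ a b m) * ζ a b n)) • T m n := by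
      simp only [Finset.smul_sum, Finset.sum_smul, smul_smul]
      exact sum_swap4 (fun a b m n =>
        (rr a * (starRingEnd ℂ) (rr b) * ((starRingEnd ℂ) (ζ a b m) * ζ a b n)) • T m n)
    have hz : ∑ a : Fin 4, ∑ b : Fin 4,
        (rr a * (starRingEnd ℂ) (rr b)) • (1 : H →L[ℂ] H) = 0 := by
      have h0 : (∑ a : Fin 4, ∑ b : Fin 4, rr a * (starRingEnd ℂ) (rr b)) = 0 := by
        simp [Fin.sum_univ_four, rr]
      calc ∑ a : Fin 4, ∑ b : Fin 4, (rr a * (starRingEnd ℂ) (rr b)) • (1 : H →L[ℂ] H)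
          = (∑ a : Fin 4, ∑ b : Fin 4, rr a * (starRingEnd ℂ) (rr b)) • (1 : H →L[ℂ] H) := by
            simp [Finset.sum_smul]
        _ = 0 := by rw [h0, zero_smul]
    have e3 : ∑ m, ∑ n, (if m = k ∧ n = j then (16 : ℂ) else 0) • T m n
        = (16 : ℂ) • T k j := by
      rw [Finset.sum_eq_single k]
      · rw [Finset.sum_eq_single j] <;> simp +contextual [hkj]
      · intro m _ hm
        simp [hm]
      · simp
    have main : (16 : ℂ) • T k j = 0 := by
      rw [← e3]
      calc ∑ m, ∑ n, (if m = k ∧ n = j then (16 : ℂ) else 0) • T m n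
          = ∑ m, ∑ n, (∑ a : Fin 4, ∑ b : Fin 4,
              (rr a * (starRingEnd ℂ) (rr b)) * ((starRingEnd ℂ) (ζ a b m) * ζ a b n)) • T m n :=
            Finset.sum_congr rfl fun m _ => Finset.sum_congr rfl fun n _ => by rw [coeff]
        _ = ∑ a : Fin 4, ∑ b : Fin 4, (rr a * (starRingEnd ℂ) (rr b)) •
              (∑ m, ∑ n, ((starRingEnd ℂ) (ζ a b m) * ζ a b n) • T m n) := e2.symm
        _ = ∑ a : Fin 4, ∑ b : Fin 4, (rr a * (starRingEnd ℂ) (rr b)) • (1 : H →L[ℂ] H) :=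
            Finset.sum_congr rfl fun a _ => Finset.sum_congr rfl fun b _ => by rw [hkey a b]
        _ = 0 := hz
    have h16 : (16 : ℂ) ≠ 0 := by norm_num
    exact (smul_eq_zero.mp main).resolve_left h16
  refine ⟨?_, offdiag⟩
  have h1 := key (fun _ => 1) (by simp)
  simp only [map_one, one_mul, one_smul] at h1
  rw [← h1]
  exact Finset.sum_congr rfl fun m _ =>
    (Finset.sum_eq_single m (fun n _ hn => offdiag m n (Ne.symm hn)) (by simp)).symm
end

section
/- Let H be a Hilbert space, G₁,...,G_N ∈ L(H) an N-tuple such that ∑_k ζ_k G_k is unitary for all ζ in the N-torus, and let C₁,...,C_N ∈ L(E) be contractions on a Hilbert space E admitting a joint unitary dilation. Then ∑_{k=1}^N G_k ⊗ C_k is a contraction, i.e., ‖∑_k G_k ⊗ C_k‖ ≤ 1. -/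
open ContinuousLinearMap
open scoped InnerProductSpace

/-!
Unitarity of `∑ ζₖ Gₖ` for every `ζ` on the torus, read as a trigonometric polynomial of degree
one in a single coordinate `ζₖ = t`, forces `Gₖ⋆ Gₗ = 0` for `k ≠ l` and `∑ Gₖ⋆ Gₖ = 1`.
Consequently the summands `(Gₖ ⊗ Cₖ) w` of `T w` are pairwise orthogonal, and
`‖T w‖² = ∑ ‖(Gₖ ⊗ Cₖ) w‖² ≤ ∑ ‖(Gₖ ⊗ 1) w‖² = ‖w‖²`, the middle step because `1 ⊗ Cₖ` is
contractive: with the defect operator `Dₖ = (1 - Cₖ⋆ Cₖ)^½` one has `Cₖ⋆ Cₖ + Dₖ⋆ Dₖ = 1`.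
This holds on the dense span of the elementary tensors, hence everywhere.
-/

lemma eq_zero_of_forall_add_star_smul_add_smul_eq {V : Type*} [AddCommGroup V] [Module ℂ V]
    {x y z w : V} (h : ∀ t : ℂ, ‖t‖ = 1 → x + star t • y + t • z = w) : y = 0 := by
  have h₁ := h 1 (by simp)
  have h₂ := h (-1) (by simp)
  have h₃ := h Complex.I (by simp)
  simp only [star_one, star_neg, Complex.star_def, Complex.conj_I, one_smul, neg_smul] at h₁ h₂ h₃
  linear_combination (norm := match_scalars <;> ring_nf <;> simp [Complex.I_sq])
    ((1 - Complex.I) / 4) • h₁ - ((1 + Complex.I) / 4) • h₂ + (Complex.I / 2) • h₃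

lemma Fintype.sum_update_smul {ι M : Type*} [Fintype ι] [DecidableEq ι] [AddCommGroup M]
    [Module ℂ M] (ζ : ι → ℂ) (k : ι) (t : ℂ) (g : ι → M) :
    ∑ l, Function.update ζ k t l • g l = ∑ l, ζ l • g l + (t - ζ k) • g k := by
  rw [← Finset.add_sum_erase _ _ (Finset.mem_univ k), ← Finset.add_sum_erase _ _ (Finset.mem_univ k),
    Finset.sum_congr rfl fun l hl => by rw [Function.update_of_ne (Finset.ne_of_mem_erase hl)],
    Function.update_self]
  module

section Torus

variable {A ι : Type*} [Ring A] [StarRing A] [Algebra ℂ A] [StarModule ℂ A] [Fintype ι]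
  [DecidableEq ι] {G : ι → A}

lemma star_mul_sum_smul_of_forall_unitary
    (hG : ∀ ζ : ι → ℂ, (∀ k, ‖ζ k‖ = 1) → ∑ k, ζ k • G k ∈ unitary A)
    {ζ : ι → ℂ} (hζ : ∀ k, ‖ζ k‖ = 1) (k : ι) :
    star (G k) * ∑ l, ζ l • G l = ζ k • (star (G k) * G k) := by
  set R := ∑ l, ζ l • G l - ζ k • G k
  have hR : star (G k) * R = 0 := by
    refine eq_zero_of_forall_add_star_smul_add_smul_eq (x := star R * R + star (G k) * G k)
      (z := star R * G k) (w := 1) fun t ht => ?_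
    have hu := hG (Function.update ζ k t) fun l => by
      rcases eq_or_ne l k with rfl | hl <;> simp [*]
    have hupd : ∑ l, Function.update ζ k t l • G l = R + t • G k := by
      rw [Fintype.sum_update_smul]; module
    have htt : t * star t = 1 := by
      rw [Complex.star_def, Complex.mul_conj', ht]; norm_num
    rw [← (Unitary.mem_iff.mp (hupd ▸ hu)).1]
    simp only [star_add, star_smul, add_mul, mul_add, smul_mul_assoc, mul_smul_comm, smul_add,
      smul_smul, htt, one_smul]
    abel
  calc star (G k) * ∑ l, ζ l • G l = star (G k) * (R + ζ k • G k) := by rw [sub_add_cancel]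
    _ = ζ k • (star (G k) * G k) := by rw [mul_add, hR, zero_add, mul_smul_comm]

lemma star_mul_eq_zero_of_forall_unitary
    (hG : ∀ ζ : ι → ℂ, (∀ k, ‖ζ k‖ = 1) → ∑ k, ζ k • G k ∈ unitary A)
    {k l : ι} (hkl : k ≠ l) : star (G k) * G l = 0 := by
  have h₁ := star_mul_sum_smul_of_forall_unitary hG (ζ := fun _ => 1) (fun _ => by simp) k
  have h₂ := star_mul_sum_smul_of_forall_unitary hG
    (ζ := Function.update (fun _ => 1) l (-1)) (fun m => by
      rcases eq_or_ne m l with rfl | hm <;> simp [*]) k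
  rw [Fintype.sum_update_smul, Function.update_of_ne hkl, mul_add, h₁, add_eq_left,
    mul_smul_comm, smul_eq_zero] at h₂
  exact h₂.resolve_left (by norm_num)

lemma sum_star_mul_self_of_forall_unitary
    (hG : ∀ ζ : ι → ℂ, (∀ k, ‖ζ k‖ = 1) → ∑ k, ζ k • G k ∈ unitary A) :
    ∑ k, star (G k) * G k = 1 := by
  have h := star_mul_sum_smul_of_forall_unitary hG (ζ := fun _ => 1) (fun _ => by simp)
  simp only [one_smul] at h
  rw [← (Unitary.mem_iff.mp (hG (fun _ => 1) (fun _ => by simp))).1]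
  simp only [one_smul, star_sum, Finset.sum_mul, h]

end Torus

lemma CStarAlgebra.exists_star_mul_self_add_star_mul_self_eq_one {A : Type*} [CStarAlgebra A]
    [PartialOrder A] [StarOrderedRing A] {c : A} (hc : ‖c‖ ≤ 1) :
    ∃ d : A, star c * c + star d * d = 1 := by
  have hle : star c * c ≤ 1 := by
    rw [← CStarAlgebra.norm_le_one_iff_of_nonneg _ (star_mul_self_nonneg c),
      CStarRing.norm_star_mul_self]
    nlinarith [norm_nonneg c]
  refine ⟨CFC.sqrt (1 - star c * c), ?_⟩
  rw [(CFC.sqrt_nonneg (1 - star c * c)).isSelfAdjoint.star_eq,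
    CFC.sqrt_mul_sqrt_self _ (sub_nonneg.2 hle), add_sub_cancel]

section InnerProductSpace

variable {E : Type*} [NormedAddCommGroup E] [InnerProductSpace ℂ E] {κ : Type*} [Fintype κ]

lemma ContinuousLinearMap.inner_apply_apply_eq_inner_star_mul_apply [CompleteSpace E]
    (A B : E →L[ℂ] E) (u u' : E) : ⟪A u, B u'⟫_ℂ = ⟪u, (star A * B) u'⟫_ℂ := by
  rw [star_eq_adjoint]
  exact (adjoint_inner_right A u (B u')).symm

lemma sum_inner_apply_apply_eq_inner [CompleteSpace E] {A : κ → E →L[ℂ] E}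
    (hA : ∑ k, star (A k) * A k = 1) (u u' : E) : ∑ k, ⟪A k u, A k u'⟫_ℂ = ⟪u, u'⟫_ℂ := by
  simp_rw [inner_apply_apply_eq_inner_star_mul_apply, ← inner_sum, ← sum_apply, hA,
    one_apply_eq_self]

lemma norm_sum_sq_eq_sum_norm_sq {v : κ → E} (hv : Pairwise fun k l => ⟪v k, v l⟫_ℂ = 0) :
    ‖∑ k, v k‖ ^ 2 = ∑ k, ‖v k‖ ^ 2 := by
  classical
  have h : ⟪∑ k, v k, ∑ l, v l⟫_ℂ = ∑ k, ⟪v k, v k⟫_ℂ := by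
    simp_rw [sum_inner, inner_sum]
    exact Finset.sum_congr rfl fun k _ => Finset.sum_eq_single k (fun l _ hlk => hv hlk.symm)
      (by simp)
  simp only [inner_self_eq_norm_sq_to_K] at h
  exact_mod_cast h

end InnerProductSpace

section TensorEmbedding

variable {H E K : Type*} [NormedAddCommGroup H] [InnerProductSpace ℂ H]
  [NormedAddCommGroup E] [InnerProductSpace ℂ E] [NormedAddCommGroup K] [InnerProductSpace ℂ K]
  {φ : H →ₗ[ℂ] E →ₗ[ℂ] K} {m n κ : Type*} [Fintype m] [Fintype n] [Fintype κ]

lemma inner_sum_apply_sum_apply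
    (hφ : ∀ x x' y y', ⟪φ x y, φ x' y'⟫_ℂ = ⟪x, x'⟫_ℂ * ⟪y, y'⟫_ℂ)
    (a : m → H) (b : m → E) (a' : n → H) (b' : n → E) :
    ⟪∑ i, φ (a i) (b i), ∑ j, φ (a' j) (b' j)⟫_ℂ = ∑ i, ∑ j, ⟪a i, a' j⟫_ℂ * ⟪b i, b' j⟫_ℂ := by
  simp only [sum_inner, inner_sum, hφ]
  exact Finset.sum_comm

lemma inner_sum_apply_sum_apply_eq_zero
    (hφ : ∀ x x' y y', ⟪φ x y, φ x' y'⟫_ℂ = ⟪x, x'⟫_ℂ * ⟪y, y'⟫_ℂ) [CompleteSpace H]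
    {S S' : H →L[ℂ] H} (hS : star S * S' = 0) (a : m → H) (b : m → E) (a' : n → H)
    (b' : n → E) : ⟪∑ i, φ (S (a i)) (b i), ∑ j, φ (S' (a' j)) (b' j)⟫_ℂ = 0 := by
  simp [inner_sum_apply_sum_apply hφ, inner_apply_apply_eq_inner_star_mul_apply, hS]

lemma sum_norm_sq_sum_apply_left
    (hφ : ∀ x x' y y', ⟪φ x y, φ x' y'⟫_ℂ = ⟪x, x'⟫_ℂ * ⟪y, y'⟫_ℂ) [CompleteSpace H]
    {S : κ → H →L[ℂ] H} (hS : ∑ k, star (S k) * S k = 1) (a : m → H) (b : m → E) :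
    ∑ k, ‖∑ i, φ (S k (a i)) (b i)‖ ^ 2 = ‖∑ i, φ (a i) (b i)‖ ^ 2 := by
  have h : ∑ k, ⟪∑ i, φ (S k (a i)) (b i), ∑ j, φ (S k (a j)) (b j)⟫_ℂ
      = ⟪∑ i, φ (a i) (b i), ∑ j, φ (a j) (b j)⟫_ℂ := by
    simp_rw [inner_sum_apply_sum_apply hφ]
    rw [Finset.sum_comm]
    refine Finset.sum_congr rfl fun i _ => ?_
    rw [Finset.sum_comm]
    simp_rw [← Finset.sum_mul, sum_inner_apply_apply_eq_inner hS]
  simp only [inner_self_eq_norm_sq_to_K] at h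
  exact_mod_cast h

lemma sum_norm_sq_sum_apply_right
    (hφ : ∀ x x' y y', ⟪φ x y, φ x' y'⟫_ℂ = ⟪x, x'⟫_ℂ * ⟪y, y'⟫_ℂ) [CompleteSpace E]
    {S : κ → E →L[ℂ] E} (hS : ∑ k, star (S k) * S k = 1) (a : m → H) (b : m → E) :
    ∑ k, ‖∑ i, φ (a i) (S k (b i))‖ ^ 2 = ‖∑ i, φ (a i) (b i)‖ ^ 2 := by
  have h : ∑ k, ⟪∑ i, φ (a i) (S k (b i)), ∑ j, φ (a j) (S k (b j))⟫_ℂ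
      = ⟪∑ i, φ (a i) (b i), ∑ j, φ (a j) (b j)⟫_ℂ := by
    simp_rw [inner_sum_apply_sum_apply hφ]
    rw [Finset.sum_comm]
    refine Finset.sum_congr rfl fun i _ => ?_
    rw [Finset.sum_comm]
    simp_rw [← Finset.mul_sum, sum_inner_apply_apply_eq_inner hS]
  simp only [inner_self_eq_norm_sq_to_K] at h
  exact_mod_cast h

lemma norm_sum_apply_apply_right_le
    (hφ : ∀ x x' y y', ⟪φ x y, φ x' y'⟫_ℂ = ⟪x, x'⟫_ℂ * ⟪y, y'⟫_ℂ) [CompleteSpace E]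
    {C : E →L[ℂ] E} (hC : ‖C‖ ≤ 1) (a : m → H) (b : m → E) :
    ‖∑ i, φ (a i) (C (b i))‖ ≤ ‖∑ i, φ (a i) (b i)‖ := by
  obtain ⟨D, hD⟩ := CStarAlgebra.exists_star_mul_self_add_star_mul_self_eq_one hC
  have h := sum_norm_sq_sum_apply_right hφ (S := ![C, D]) (by simpa using hD) a b
  simp only [Fin.sum_univ_two, Matrix.cons_val_zero, Matrix.cons_val_one] at h
  refine le_of_pow_le_pow_left₀ two_ne_zero (norm_nonneg _) ?_
  nlinarith [sq_nonneg ‖∑ i, φ (a i) (D (b i))‖]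

lemma norm_sum_sum_apply_apply_le
    (hφ : ∀ x x' y y', ⟪φ x y, φ x' y'⟫_ℂ = ⟪x, x'⟫_ℂ * ⟪y, y'⟫_ℂ) [CompleteSpace H]
    [CompleteSpace E] {G : κ → H →L[ℂ] H} (hGG : Pairwise fun k l => star (G k) * G l = 0)
    (hG : ∑ k, star (G k) * G k = 1) {C : κ → E →L[ℂ] E} (hC : ∀ k, ‖C k‖ ≤ 1)
    (a : m → H) (b : m → E) :
    ‖∑ k, ∑ i, φ (G k (a i)) (C k (b i))‖ ≤ ‖∑ i, φ (a i) (b i)‖ := by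
  refine le_of_pow_le_pow_left₀ two_ne_zero (norm_nonneg _) ?_
  calc ‖∑ k, ∑ i, φ (G k (a i)) (C k (b i))‖ ^ 2
      = ∑ k, ‖∑ i, φ (G k (a i)) (C k (b i))‖ ^ 2 :=
        norm_sum_sq_eq_sum_norm_sq fun k l hkl =>
          inner_sum_apply_sum_apply_eq_zero hφ (hGG hkl) _ _ _ _
    _ ≤ ∑ k, ‖∑ i, φ (G k (a i)) (b i)‖ ^ 2 := by
        gcongr with k
        exact norm_sum_apply_apply_right_le hφ (hC k) _ _
    _ = ‖∑ i, φ (a i) (b i)‖ ^ 2 := sum_norm_sq_sum_apply_left hφ hG a b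

lemma exists_eq_sum_apply_of_mem_span {w : K}
    (hw : w ∈ Submodule.span ℂ {z | ∃ x y, φ x y = z}) :
    ∃ (n : ℕ) (a : Fin n → H) (b : Fin n → E), w = ∑ i, φ (a i) (b i) := by
  obtain ⟨n, f, g, rfl⟩ := Submodule.mem_span_set'.mp hw
  choose a b hab using fun i => (g i).2
  exact ⟨n, fun i => f i • a i, b, Finset.sum_congr rfl fun i _ => by simp [hab]⟩

end TensorEmbedding

theorem stmt6_general {H E HK : Type*}
    [NormedAddCommGroup H] [InnerProductSpace ℂ H] [CompleteSpace H]
    [NormedAddCommGroup E] [InnerProductSpace ℂ E] [CompleteSpace E]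
    [NormedAddCommGroup HK] [InnerProductSpace ℂ HK]
    {N : ℕ} (G : Fin N → H →L[ℂ] H)
    (hG : ∀ ζ : Fin N → ℂ, (∀ k, ‖ζ k‖ = 1) →
      (∑ k, ζ k • G k) ∈ unitary (H →L[ℂ] H))
    (C : Fin N → E →L[ℂ] E) (hC : ∀ k, ‖C k‖ ≤ 1)
    -- `T` acts as `∑ G_k ⊗ C_k` on the Hilbert tensor product `H ⊗ E`
    (ι : H →ₗ[ℂ] E →ₗ[ℂ] HK)
    (hinner : ∀ (x x' : H) (y y' : E),
      ⟪ι x y, ι x' y'⟫_ℂ = ⟪x, x'⟫_ℂ * ⟪y, y'⟫_ℂ)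
    (hdense : (Submodule.span ℂ {z : HK | ∃ x y, ι x y = z}).topologicalClosure = ⊤)
    (T : HK →L[ℂ] HK)
    (hT : ∀ (x : H) (y : E), T (ι x y) = ∑ k, ι (G k x) (C k y)) :
    ‖T‖ ≤ 1 := by
  refine opNorm_le_bound T zero_le_one fun z => ?_
  rw [one_mul]
  refine (Submodule.dense_iff_topologicalClosure_eq_top.2 hdense).induction (fun w hw => ?_)
    (isClosed_le (by fun_prop) (by fun_prop)) z
  obtain ⟨n, a, b, rfl⟩ := exists_eq_sum_apply_of_mem_span hw
  simp only [map_sum, hT]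
  rw [Finset.sum_comm]
  exact norm_sum_sum_apply_apply_le hinner (fun _ _ => star_mul_eq_zero_of_forall_unitary hG)
    (sum_star_mul_self_of_forall_unitary hG) hC a b

/-- If `∑ ζ_k • G_k` is unitary for all `ζ` in the `N`-torus and
`C_1, …, C_N` are contractions on `E` admitting a joint unitary dilation
(unitaries `Ud_k` on `K' ⊇ E`, with the inclusion realized by an isometry `J`),
then any operator `T` acting as `∑ G_k ⊗ C_k` on the Hilbert tensor product
`H ⊗ E` is a contraction. -/
theorem stmt6 {H E K' HK : Type*}
    [NormedAddCommGroup H] [InnerProductSpace ℂ H] [CompleteSpace H]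
    [NormedAddCommGroup E] [InnerProductSpace ℂ E] [CompleteSpace E]
    [NormedAddCommGroup K'] [InnerProductSpace ℂ K'] [CompleteSpace K']
    [NormedAddCommGroup HK] [InnerProductSpace ℂ HK] [CompleteSpace HK]
    {N : ℕ} (G : Fin N → H →L[ℂ] H)
    (hG : ∀ ζ : Fin N → ℂ, (∀ k, ‖ζ k‖ = 1) →
      (∑ k, ζ k • G k) ∈ unitary (H →L[ℂ] H))
    (C : Fin N → E →L[ℂ] E) (hC : ∀ k, ‖C k‖ ≤ 1)
    -- joint unitary dilation of the tuple `C`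
    (J : E →L[ℂ] K') (hJ : ∀ x, ‖J x‖ = ‖x‖)
    (Ud : Fin N → K' →L[ℂ] K') (hUd : ∀ k, Ud k ∈ unitary (K' →L[ℂ] K'))
    (hdil : ∀ w : FreeMonoid (Fin N),
      FreeMonoid.lift C w = adjoint J ∘L FreeMonoid.lift Ud w ∘L J)
    -- `T` acts as `∑ G_k ⊗ C_k` on the Hilbert tensor product `H ⊗ E`
    (ι : H →ₗ[ℂ] E →ₗ[ℂ] HK)
    (hinner : ∀ (x x' : H) (y y' : E),
      ⟪ι x y, ι x' y'⟫_ℂ = ⟪x, x'⟫_ℂ * ⟪y, y'⟫_ℂ)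
    (hdense : (Submodule.span ℂ {z : HK | ∃ x y, ι x y = z}).topologicalClosure = ⊤)
    (T : HK →L[ℂ] HK)
    (hT : ∀ (x : H) (y : E), T (ι x y) = ∑ k, ι (G k x) (C k y)) :
    ‖T‖ ≤ 1 :=
  stmt6_general G hG C hC ι hinner hdense T hT
end

section
/- Let Λ ⊂ F_N be a nonempty admissible finite set and let U, Y be complex vector spaces (or Hilbert spaces). Suppose a noncommutative polynomial p(z) = ∑_{w∈Λ} p_w z^w with coefficients p_w ∈ L(U,Y) satisfies p(T) := ∑_{w∈Λ} p_w ⊗ T^w = 0 for every N-tuple T of Λ-jointly nilpotent contractive n×n matrices, for n = #Λ. Then p_w = 0 for all w ∈ Λ. -/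
/-!
Let `S` be the tuple of truncated shifts `e_v ↦ e_{g_k v}` (zero when `g_k v ∉ Λ`) on the space
with orthonormal basis `(e_v)_{v ∈ Λ}`. Admissibility makes `Λ` closed under prefixes and suffixes,
so `S^w e_v = e_{wv}` or `0`; hence `S^w = 0` for `w ∉ Λ` and `S^w e_∅ = e_w` for `w ∈ Λ`.
After rescaling by a small `λ ≠ 0`, `λS` is contractive, and
`p(λS)(u ⊗ e_∅) = ∑_{w ∈ Λ} λ^{|w|} p_w u ⊗ e_w` vanishes only if every `p_w u` does.
-/
open FreeMonoid

namespace FreeMonoid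

variable {α : Type*} {Λ : Set (FreeMonoid α)}

theorem mem_of_mul_mem_right (h : ∀ k w, of k * w ∈ Λ → w ∈ Λ) {a c : FreeMonoid α}
    (hac : a * c ∈ Λ) : c ∈ Λ := by
  induction a using FreeMonoid.inductionOn' with
  | one => simpa using hac
  | of_mul k a ih => exact ih (h k _ (by rwa [mul_assoc] at hac))

theorem mem_of_mul_mem_left (h : ∀ k w, w * of k ∈ Λ → w ∈ Λ) {a c : FreeMonoid α}
    (hac : a * c ∈ Λ) : a ∈ Λ := by
  induction c using FreeMonoid.inductionOn' generalizing a with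
  | one => simpa using hac
  | of_mul k c ih => exact h k a (ih (by rwa [← mul_assoc] at hac))

theorem lift_smul {R A : Type*} [CommSemiring R] [Semiring A] [Algebra R A] (r : R)
    (f : α → A) (w : FreeMonoid α) : lift (fun k => r • f k) w = r ^ w.length • lift f w := by
  induction w using FreeMonoid.inductionOn' with
  | one => simp
  | of_mul k w ih =>
    rw [map_mul, map_mul, ih, lift_eval_of, lift_eval_of, length_mul, length_of, pow_add, pow_one,
      smul_mul_smul_comm]

end FreeMonoid

namespace Module.Basis

open scoped Classical in
noncomputable def truncatedShift {M R V : Type*} [Monoid M] [CommSemiring R] [AddCommMonoid V]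
    [Module R V] {Λ : Set M} (b : Basis Λ R V) (hΛ : ∀ a c, a * c ∈ Λ → c ∈ Λ) :
    M →* Module.End R V where
  toFun a := b.constr R fun u => if h : a * u ∈ Λ then b ⟨a * u, h⟩ else 0
  map_one' := b.ext fun u => by simp
  map_mul' a c := b.ext fun u => by
    by_cases hcu : c * u ∈ Λ
    · simp [hcu, mul_assoc]
    · have : a * (c * u) ∉ Λ := fun h => hcu (hΛ _ _ h)
      simp [hcu, mul_assoc, this]

variable {M R V : Type*} [Monoid M] [CommSemiring R] [AddCommMonoid V] [Module R V]
  {Λ : Set M} (b : Basis Λ R V) (hΛ : ∀ a c, a * c ∈ Λ → c ∈ Λ)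

open scoped Classical in
theorem truncatedShift_apply_basis (a : M) (u : Λ) :
    b.truncatedShift hΛ a (b u) = if h : a * u ∈ Λ then b ⟨a * u, h⟩ else 0 :=
  b.constr_basis R _ u

theorem truncatedShift_eq_zero {a : M} (ha : ∀ u ∈ Λ, a * u ∉ Λ) : b.truncatedShift hΛ a = 0 :=
  b.ext fun u => by simp [truncatedShift_apply_basis, ha u u.2]

theorem truncatedShift_apply_basis_one (h1 : (1 : M) ∈ Λ) {a : M} (ha : a ∈ Λ) :
    b.truncatedShift hΛ a (b ⟨1, h1⟩) = b ⟨a, ha⟩ := by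
  simp [truncatedShift_apply_basis, ha]

end Module.Basis

theorem exists_ne_zero_forall_norm_smul_le_one {𝕜 ι E : Type*} [RCLike 𝕜] [Fintype ι]
    [SeminormedAddCommGroup E] [NormedSpace 𝕜 E] (f : ι → E) :
    ∃ c : 𝕜, c ≠ 0 ∧ ∀ i, ‖c • f i‖ ≤ 1 := by
  set C := 1 + ∑ i, ‖f i‖
  have hC : 0 < C := by positivity
  refine ⟨((C⁻¹ : ℝ) : 𝕜), by simp [hC.ne'], fun i => ?_⟩
  rw [norm_smul, RCLike.norm_ofReal, abs_of_pos (inv_pos.2 hC), inv_mul_le_iff₀ hC]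
  calc ‖f i‖ ≤ ∑ j, ‖f j‖ := Finset.single_le_sum (fun j _ => norm_nonneg (f j)) (Finset.mem_univ i)
    _ ≤ C * 1 := by simp [C]

theorem TensorProduct.eq_zero_of_sum_tmul_basis_eq_zero {R M N κ : Type*} [CommSemiring R]
    [AddCommMonoid M] [Module R M] [AddCommMonoid N] [Module R N] [Fintype κ]
    (𝒞 : Module.Basis κ R N) {m : κ → M} (h : ∑ i, m i ⊗ₜ[R] 𝒞 i = 0) (i : κ) : m i = 0 := by
  have := TensorProduct.sum_tmul_basis_right_eq_zero 𝒞 (Finsupp.equivFunOnFinite.symm m)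
    (by simpa [Finsupp.sum_fintype] using h)
  exact congr($this i)

/-- If a noncommutative polynomial `p(z) = ∑_{w ∈ Λ} p_w z^w` with coefficients
in `L(U,Y)` satisfies `p(T) = ∑_{w ∈ Λ} p_w ⊗ T^w = 0` for every `N`-tuple `T`
of `Λ`-jointly nilpotent contractive `n×n` matrices with `n = #Λ`, then all
coefficients `p_w`, `w ∈ Λ`, vanish. -/
theorem stmt12 {N : ℕ} (Λ : Finset (FreeMonoid (Fin N)))
    (hadm : ∀ w ∉ Λ, ∀ k : Fin N,
      FreeMonoid.of k * w ∉ Λ ∧ w * FreeMonoid.of k ∉ Λ)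
    (hne : Λ.Nonempty)
    {U Y : Type*} [AddCommGroup U] [Module ℂ U] [AddCommGroup Y] [Module ℂ Y]
    (p : FreeMonoid (Fin N) → (U →ₗ[ℂ] Y))
    (hp : ∀ T : Fin N →
        (EuclideanSpace ℂ (Fin Λ.card) →L[ℂ] EuclideanSpace ℂ (Fin Λ.card)),
      (∀ k, ‖T k‖ ≤ 1) →
      (∀ v ∉ Λ, FreeMonoid.lift (fun k => (T k).toLinearMap) v = 0) →
      ∑ w ∈ Λ, TensorProduct.map (p w)
        (FreeMonoid.lift (fun k => (T k).toLinearMap) w) = 0) :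
    ∀ w ∈ Λ, p w = 0 := by
  have hsuffix : ∀ a c, a * c ∈ (Λ : Set (FreeMonoid (Fin N))) → c ∈ (Λ : Set _) := fun _ _ =>
    mem_of_mul_mem_right fun k w hkw => by_contra fun h => (hadm w h k).1 hkw
  have hprefix : ∀ a c, a * c ∈ Λ → a ∈ Λ := fun _ _ =>
    mem_of_mul_mem_left (Λ := (Λ : Set _)) fun k w hwk => by_contra fun h => (hadm w h k).2 hwk
  have h1 : (1 : FreeMonoid (Fin N)) ∈ Λ := hne.elim fun w hw => hsuffix w 1 (by rwa [mul_one])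
  let b : Module.Basis (Λ : Set (FreeMonoid (Fin N))) ℂ (EuclideanSpace ℂ (Fin Λ.card)) :=
    (EuclideanSpace.basisFun (Fin Λ.card) ℂ).toBasis.reindex Λ.equivFin.symm
  let S := b.truncatedShift hsuffix
  obtain ⟨c, hc0, hc⟩ := exists_ne_zero_forall_norm_smul_le_one (𝕜 := ℂ) fun k =>
    LinearMap.toContinuousLinearMap (S (of k))
  have hlift (w : FreeMonoid (Fin N)) :
      lift (fun k => (c • LinearMap.toContinuousLinearMap (S (of k))).toLinearMap) w =
        c ^ w.length • S w := by
    simpa using FreeMonoid.lift_smul c (S ∘ of) w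
  have hsum := hp _ hc fun v hv => by
    rw [hlift, b.truncatedShift_eq_zero hsuffix fun u _ h => hv (hprefix _ _ h), smul_zero]
  simp_rw [hlift] at hsum
  intro w hw
  ext u
  have hcoord : ∑ v : (Λ : Set (FreeMonoid (Fin N))), (c ^ v.1.length • p v u) ⊗ₜ[ℂ] b v = 0 := by
    simpa [← Finset.sum_coe_sort Λ, S, b.truncatedShift_apply_basis_one hsuffix h1,
      TensorProduct.smul_tmul'] using congr($hsum (u ⊗ₜ b ⟨1, h1⟩))
  simpa [hc0] using TensorProduct.eq_zero_of_sum_tmul_basis_eq_zero b hcoord ⟨w, hw⟩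
end

section
/- Let m ∈ ℕ and let T₁,...,T_N ∈ L(E) be such that every product T_{i₁}⋯T_{i_{m+1}} of m+1 of them (with repetitions allowed) equals 0. Then there exists an orthogonal decomposition E = E₁ ⊕ ⋯ ⊕ E_{m+1} such that each T_k is strictly lower block-triangular with respect to it: T_k E_j ⊆ E_{j+1} ⊕ ⋯ ⊕ E_{m+1} for 1 ≤ j ≤ m, and T_k E_{m+1} = {0}. -/
open scoped InnerProductSpace

/-!
The subspaces `V n`, the closed span of the ranges `T_w E` over words `w` of length `n`, form a
decreasing chain of closed subspaces from `V 0 = E` down to `V (m + 1) = 0`, and each `T_k` maps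
`V n` into `V (n + 1)`. The layers `E_n = V n ⊖ V (n + 1)` are then mutually orthogonal, and by
orthogonal projection onto the closed subspaces `V (n + 1)` they span each `V n`; since
`T_k E_n ⊆ T_k V n ⊆ V (n + 1)`, every `T_k` is strictly lower block-triangular.
-/

section WordRange

variable {R M ι : Type*} [Semiring R] [AddCommMonoid M] [TopologicalSpace M] [Module R M]
  [ContinuousAdd M] [ContinuousConstSMul R M] (T : ι → M →L[R] M)

noncomputable def wordRange (n : ℕ) : Submodule R M :=
  (⨆ (w : FreeMonoid ι) (_ : w.length = n),
    LinearMap.range (FreeMonoid.lift T w : M →ₗ[R] M)).topologicalClosure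

theorem isClosed_wordRange (n : ℕ) : IsClosed (wordRange T n : Set M) :=
  Submodule.isClosed_topologicalClosure _

theorem range_le_wordRange {n : ℕ} {w : FreeMonoid ι} (hw : w.length = n) :
    LinearMap.range (FreeMonoid.lift T w : M →ₗ[R] M) ≤ wordRange T n := by
  refine le_trans ?_ (Submodule.le_topologicalClosure _)
  exact le_iSup₂_of_le w hw le_rfl

theorem wordRange_zero : wordRange T 0 = ⊤ := by
  refine eq_top_iff.2 ((range_le_wordRange T (w := 1) rfl).trans' ?_)
  simp [Module.End.one_eq_id]

theorem wordRange_succ_le (n : ℕ) : wordRange T (n + 1) ≤ wordRange T n := by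
  refine Submodule.topologicalClosure_minimal _ (iSup₂_le fun w hw => ?_) (isClosed_wordRange T n)
  obtain ⟨x, y, rfl, hx⟩ : ∃ x y : FreeMonoid ι, w = x * y ∧ x.length = n :=
    ⟨.ofList (w.toList.take n), .ofList (w.toList.drop n), by simp [← FreeMonoid.ofList_append],
      by simp [FreeMonoid.length, show w.toList.length = n + 1 from hw]⟩
  rw [map_mul, ContinuousLinearMap.toLinearMap_mul]
  exact (LinearMap.range_comp_le_range _ _).trans (range_le_wordRange T hx)

theorem wordRange_antitone : Antitone (wordRange T) :=
  antitone_nat_of_succ_le (wordRange_succ_le T)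

theorem map_wordRange_le (k : ι) (n : ℕ) :
    (wordRange T n).map (T k : M →ₗ[R] M) ≤ wordRange T (n + 1) := by
  rw [Submodule.map_le_iff_le_comap]
  refine Submodule.topologicalClosure_minimal _ (iSup₂_le fun w hw => ?_)
    ((isClosed_wordRange T _).preimage (T k).continuous)
  have := range_le_wordRange T (n := n + 1) (w := FreeMonoid.of k * w)
    (by simp [FreeMonoid.length_mul, FreeMonoid.length_of, hw, add_comm])
  rwa [map_mul, FreeMonoid.lift_eval_of, ContinuousLinearMap.toLinearMap_mul,
    Module.End.mul_eq_comp, LinearMap.range_comp, Submodule.map_le_iff_le_comap] at this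

theorem wordRange_eq_bot [T1Space M] {n : ℕ}
    (hnil : ∀ w : FreeMonoid ι, w.length = n → FreeMonoid.lift T w = 0) :
    wordRange T n = ⊥ := by
  refine eq_bot_iff.2 (Submodule.topologicalClosure_minimal _ (iSup₂_le fun w hw => ?_) ?_)
  · simp [hnil w hw]
  · simp

end WordRange

section Layer

variable {𝕜 E : Type*} [RCLike 𝕜] [NormedAddCommGroup E] [InnerProductSpace 𝕜 E]
  (V : ℕ → Submodule 𝕜 E)

def layer (n : ℕ) : Submodule 𝕜 E := V n ⊓ (V (n + 1))ᗮ

theorem isClosed_layer {n : ℕ} (hV : IsClosed (V n : Set E)) : IsClosed (layer V n : Set E) :=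
  hV.inter (Submodule.isClosed_orthogonal _)

variable {V}

theorem layer_isOrtho (hV : Antitone V) {i j : ℕ} (hij : i < j) : layer V i ⟂ layer V j :=
  (Submodule.isOrtho_orthogonal_right (V (i + 1))).symm.mono inf_le_right
    (inf_le_left.trans (hV hij))

theorem sup_layer_eq [CompleteSpace E] {n : ℕ} (hle : V (n + 1) ≤ V n)
    (hclosed : IsClosed (V (n + 1) : Set E)) : V (n + 1) ⊔ layer V n = V n := by
  have : CompleteSpace (V (n + 1)) := hclosed.completeSpace_coe
  rw [layer, inf_comm]
  exact Submodule.sup_orthogonal_inf_of_hasOrthogonalProjection hle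

theorem le_iSup_layer [CompleteSpace E] (hV : Antitone V) (hclosed : ∀ n, IsClosed (V n : Set E))
    {m : ℕ} (hbot : V (m + 1) = ⊥) (n : ℕ) :
    V n ≤ ⨆ (j : Fin (m + 1)) (_ : n ≤ (j : ℕ)), layer V j := by
  suffices ∀ d n, m + 1 ≤ n + d → V n ≤ ⨆ (j : Fin (m + 1)) (_ : n ≤ (j : ℕ)), layer V j from
    this (m + 1) n (by omega)
  intro d
  induction d with
  | zero => exact fun n hn => (hV hn).trans (hbot ▸ bot_le)
  | succ d ih =>
    intro n hn
    by_cases hnm : m + 1 ≤ n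
    · exact (hV hnm).trans (hbot ▸ bot_le)
    rw [← sup_layer_eq (hV n.le_succ) (hclosed _)]
    refine sup_le ((ih (n + 1) (by omega)).trans ?_) ?_
    · exact iSup_mono fun j => iSup_mono' fun hj => ⟨by omega, le_rfl⟩
    · exact le_iSup₂_of_le (f := fun (j : Fin (m + 1)) (_ : n ≤ (j : ℕ)) => layer V j)
        ⟨n, by omega⟩ le_rfl le_rfl

end Layer

/-- If every product of `m+1` of the operators `T_1, …, T_N ∈ L(E)` (with
repetitions) vanishes, then there is an orthogonal decomposition
`E = E_1 ⊕ ⋯ ⊕ E_{m+1}` into closed mutually orthogonal subspaces with respect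
to which every `T_k` is strictly lower block-triangular:
`T_k E_j ⊆ ⨆_{j' > j} E_{j'}` (so in particular `T_k E_{m+1} = 0`). -/
theorem stmt14 {Hs : Type*} [NormedAddCommGroup Hs] [InnerProductSpace ℂ Hs]
    [CompleteSpace Hs] {N m : ℕ} (T : Fin N → Hs →L[ℂ] Hs)
    (hnil : ∀ w : FreeMonoid (Fin N), w.length = m + 1 → FreeMonoid.lift T w = 0) :
    ∃ E : Fin (m + 1) → Submodule ℂ Hs,
      (∀ j, IsClosed (E j : Set Hs)) ∧
      (∀ i j, i ≠ j → ∀ x ∈ E i, ∀ y ∈ E j, ⟪x, y⟫_ℂ = 0) ∧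
      (⨆ j, E j = ⊤) ∧
      (∀ k j, (E j).map (T k).toLinearMap ≤ ⨆ j' > j, E j') := by
  have hV := wordRange_antitone T
  have hspan := le_iSup_layer hV (isClosed_wordRange T) (wordRange_eq_bot T hnil)
  refine ⟨fun j => layer (wordRange T) j, fun j => isClosed_layer _ (isClosed_wordRange T j),
    fun i j hij => ?_, ?_, fun k j => ?_⟩
  · rw [← Submodule.isOrtho_iff_inner_eq]
    rcases hij.lt_or_gt with h | h
    · exact layer_isOrtho hV h
    · exact (layer_isOrtho hV h).symm
  · refine eq_top_iff.2 ((wordRange_zero T).ge.trans ((hspan 0).trans ?_))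
    exact iSup_mono fun j => iSup_const_le
  · calc (layer (wordRange T) j).map (T k).toLinearMap
        ≤ (wordRange T j).map (T k).toLinearMap := Submodule.map_mono inf_le_left
      _ ≤ wordRange T (j + 1) := map_wordRange_le T k j
      _ ≤ ⨆ j' > j, layer (wordRange T) j' := hspan (j + 1)
end

section
/- An N-tuple of n×n complex matrices T = (T₁,...,T_N) satisfies T^w = 0 for all words w of length ≥ m+1 if and only if T is unitarily similar to an N-tuple of matrices each of which is strictly lower block-triangular with respect to a common decomposition ℂ^n = ℂ^{n₁} ⊕ ⋯ ⊕ ℂ^{n_{m+1}} (blocks not necessarily square, some n_j possibly zero): i.e., there exists a unitary n×n matrix V such that V T_k V* maps the j-th block into the sum of blocks j+1,...,m+1 for each j ≤ m and annihilates the last block. -/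
/-!
If all words of length `m + 1` in `T₁, …, T_N` vanish, the subspaces
`W₀ = ℂⁿ`, `W_{j+1} = ∑ₖ Tₖ W_j` form a decreasing flag ending in `W_{m+1} = 0`, and every
`Tₖ` maps `W_j` into `W_{j+1}`. An orthonormal basis adapted to the orthogonal layers
`W_j ⊖ W_{j+1}` makes all `Tₖ` strictly block lower triangular. Conversely, a product of `l`
strictly block lower triangular matrices has its nonzero entries at least `l` blocks below
the diagonal, so it vanishes once `l` exceeds the number of blocks minus one.
-/

open Matrix Module

theorem FreeMonoid.lift_comp_eq_zero_iff {α R S F : Type*} [Semiring R] [Semiring S]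
    [EquivLike F R S] [RingEquivClass F R S] (φ : F) (T : α → R) (w : FreeMonoid α) :
    FreeMonoid.lift (φ ∘ T) w = 0 ↔ FreeMonoid.lift T w = 0 := by
  have h := FreeMonoid.hom_map_lift (φ : R →* S) T w
  rw [MonoidHom.coe_coe] at h
  rw [← h, map_eq_zero_iff φ (EquivLike.injective φ)]

theorem Matrix.freeMonoidLift_apply_eq_zero_of_lt {κ ι R : Type*} [Fintype ι] [DecidableEq ι]
    [Semiring R] (S : κ → Matrix ι ι R) (f : ι → ℕ)
    (hS : ∀ k i j, f i ≤ f j → S k i j = 0) (w : FreeMonoid κ) (i j : ι)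
    (hij : f i < f j + w.length) :
    FreeMonoid.lift S w i j = 0 := by
  induction w using FreeMonoid.recOn generalizing i with
  | one => exact one_apply_ne (by rintro rfl; simp at hij)
  | of_mul k w ih =>
    rw [map_mul, FreeMonoid.lift_eval_of, mul_apply]
    refine Finset.sum_eq_zero fun p _ => ?_
    rcases le_or_gt (f i) (f p) with hip | hpi
    · rw [hS k i p hip, zero_mul]
    · rw [FreeMonoid.length_mul, FreeMonoid.length_of] at hij
      rw [ih p (by omega), mul_zero]

theorem Matrix.freeMonoidLift_eq_zero_of_strictBlockLower {κ ι R : Type*} [Fintype ι]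
    [DecidableEq ι] [Semiring R] {m : ℕ} (S : κ → Matrix ι ι R) (f : ι → Fin (m + 1))
    (hS : ∀ k i j, f i ≤ f j → S k i j = 0) (w : FreeMonoid κ) (hw : m + 1 ≤ w.length) :
    FreeMonoid.lift S w = 0 := by
  ext i j
  exact freeMonoidLift_apply_eq_zero_of_lt S (fun i => f i) (fun k i j => hS k i j) w i j
    (by have := (f i).isLt; omega)

section ImageFlag

variable {κ R M : Type*} [Semiring R] [AddCommMonoid M] [Module R M]

def imageFlag (A : κ → Module.End R M) : ℕ → Submodule R M
  | 0 => ⊤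
  | j + 1 => ⨆ k, (imageFlag A j).map (A k)

theorem map_imageFlag_le (A : κ → Module.End R M) (k : κ) (j : ℕ) :
    (imageFlag A j).map (A k) ≤ imageFlag A (j + 1) :=
  le_iSup (fun k => (imageFlag A j).map (A k)) k

theorem imageFlag_antitone (A : κ → Module.End R M) : Antitone (imageFlag A) := by
  refine antitone_nat_of_succ_le fun j => ?_
  induction j with
  | zero => exact le_top
  | succ j ih => exact iSup_mono fun k => Submodule.map_mono ih

theorem map_imageFlag_eq_bot {m : ℕ} (A : κ → Module.End R M)
    (hA : ∀ w : FreeMonoid κ, m ≤ w.length → FreeMonoid.lift A w = 0) (j : ℕ)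
    (v : FreeMonoid κ) (hv : m ≤ v.length + j) :
    (imageFlag A j).map (FreeMonoid.lift A v) = ⊥ := by
  induction j generalizing v with
  | zero => rw [hA v hv, Submodule.map_zero]
  | succ j ih =>
    simp only [imageFlag, Submodule.map_iSup, ← Submodule.map_comp]
    refine iSup_eq_bot.mpr fun k => ?_
    rw [← Module.End.mul_eq_comp, ← FreeMonoid.lift_eval_of A k, ← map_mul]
    exact ih _ (by rw [FreeMonoid.length_mul, FreeMonoid.length_of]; omega)

theorem imageFlag_eq_bot {m : ℕ} (A : κ → Module.End R M)
    (hA : ∀ w : FreeMonoid κ, m ≤ w.length → FreeMonoid.lift A w = 0) :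
    imageFlag A m = ⊥ := by
  simpa [Module.End.one_eq_id, Submodule.map_id] using map_imageFlag_eq_bot A hA m 1 (by simp)

end ImageFlag

section AdaptedBasis

variable {𝕜 E : Type*} [RCLike 𝕜] [NormedAddCommGroup E] [InnerProductSpace 𝕜 E]

def flagLayer (W : ℕ → Submodule 𝕜 E) (j : ℕ) : Submodule 𝕜 E :=
  W j ⊓ (W (j + 1))ᗮ

theorem orthogonalFamily_flagLayer {W : ℕ → Submodule 𝕜 E} (hW : Antitone W) :
    OrthogonalFamily 𝕜 (fun j => flagLayer W j) (fun j => (flagLayer W j).subtypeₗᵢ) := by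
  suffices h : ∀ i j, i < j → ∀ x ∈ flagLayer W i, ∀ y ∈ flagLayer W j, inner 𝕜 x y = 0 by
    intro i j hij x y
    rcases lt_or_gt_of_ne hij with hlt | hgt
    · exact h i j hlt x x.2 y y.2
    · exact inner_eq_zero_symm.mp (h j i hgt y y.2 x x.2)
  intro i j hij x hx y hy
  exact (Submodule.mem_orthogonal' _ _).mp hx.2 y (hW hij hy.1)

theorem flag_le_iSup_flagLayer [FiniteDimensional 𝕜 E] {W : ℕ → Submodule 𝕜 E}
    (hW : Antitone W) {m : ℕ} (hbot : W (m + 1) = ⊥) {t : ℕ} (ht : t ≤ m + 1) :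
    W t ≤ ⨆ j : Fin (m + 1), flagLayer W j := by
  induction ht using Nat.decreasingInduction with
  | self => simp [hbot]
  | of_succ t ht ih =>
    rw [← Submodule.sup_orthogonal_inf_of_hasOrthogonalProjection (hW t.le_succ)]
    exact sup_le ih <| inf_comm (W t) _ ▸ le_iSup (fun j : Fin (m + 1) => flagLayer W j) ⟨t, ht⟩

theorem exists_orthonormalBasis_subordinate_flag [FiniteDimensional 𝕜 E] {n m : ℕ}
    (hn : finrank 𝕜 E = n) {W : ℕ → Submodule 𝕜 E} (hW : Antitone W) (htop : W 0 = ⊤)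
    (hbot : W (m + 1) = ⊥) :
    ∃ (b : OrthonormalBasis (Fin n) 𝕜 E) (f : Fin n → Fin (m + 1)), Monotone f ∧
      ∀ i, b i ∈ W (f i) ∧ b i ∈ (W (f i + 1))ᗮ := by
  have hOrth := (orthogonalFamily_flagLayer hW).comp (Fin.val_injective (n := m + 1))
  have hInt : DirectSum.IsInternal fun j : Fin (m + 1) => flagLayer W j :=
    DirectSum.isInternal_submodule_of_iSupIndep_of_iSup_eq_top hOrth.independent <|
      eq_top_iff.mpr (htop ▸ flag_le_iSup_flagLayer hW hbot (Nat.zero_le _))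
  -- sorting the layer index makes it monotone
  let g := fun a => hInt.subordinateOrthonormalBasisIndex hn a hOrth
  let σ := Tuple.sort g
  refine ⟨(hInt.subordinateOrthonormalBasis hn hOrth).reindex σ.symm, g ∘ σ,
    Tuple.monotone_sort g, fun i => ?_⟩
  rw [OrthonormalBasis.coe_reindex]
  exact hInt.subordinateOrthonormalBasis_subordinate hn (σ i) hOrth

end AdaptedBasis

theorem star_basisToMatrix_mul_mul_apply {𝕜 ι : Type*} [RCLike 𝕜] [Fintype ι] [DecidableEq ι]
    (b : OrthonormalBasis ι 𝕜 (EuclideanSpace 𝕜 ι)) (M : Matrix ι ι 𝕜) (i j : ι) :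
    (star ((EuclideanSpace.basisFun ι 𝕜).toBasis.toMatrix b.toBasis) * M *
      (EuclideanSpace.basisFun ι 𝕜).toBasis.toMatrix b.toBasis) i j =
      inner 𝕜 (b i) (toEuclideanLin M (b j)) := by
  simp only [mul_apply, star_apply, Module.Basis.toMatrix_apply, OrthonormalBasis.coe_toBasis,
    EuclideanSpace.basisFun_toBasis, PiLp.basisFun_repr,
    EuclideanSpace.inner_eq_star_dotProduct, dotProduct, Matrix.toLpLin_apply, mulVec,
    Pi.star_apply, Finset.sum_mul]
  rw [Finset.sum_comm]
  refine Finset.sum_congr rfl fun p _ => Finset.sum_congr rfl fun q _ => ?_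
  ring

theorem inner_apply_eq_zero_of_mem_imageFlag {𝕜 E κ : Type*} [RCLike 𝕜] [NormedAddCommGroup E]
    [InnerProductSpace 𝕜 E] (A : κ → Module.End 𝕜 E) (k : κ) {i j : ℕ} (hij : i ≤ j) {x y : E}
    (hx : x ∈ (imageFlag A (i + 1))ᗮ) (hy : y ∈ imageFlag A j) :
    inner 𝕜 x (A k y) = 0 :=
  (Submodule.mem_orthogonal' _ _).mp hx _ <|
    imageFlag_antitone A (Nat.succ_le_succ hij) (map_imageFlag_le A k j ⟨y, hy, rfl⟩)

/-- The block decomposition is encoded by a monotone assignment `f : Fin n → Fin (m+1)` of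
coordinates to blocks; strict lower block-triangularity of `V T_k V*` means
`(V T_k V*) i j = 0` whenever `f i ≤ f j`. -/
theorem stmt15 {N n m : ℕ} (T : Fin N → Matrix (Fin n) (Fin n) ℂ) :
    (∀ w : FreeMonoid (Fin N), m + 1 ≤ w.length → FreeMonoid.lift T w = 0) ↔
    ∃ V ∈ Matrix.unitaryGroup (Fin n) ℂ, ∃ f : Fin n → Fin (m + 1),
      Monotone f ∧
      ∀ (k : Fin N) (i j : Fin n), f i ≤ f j →
        (V * T k * star V) i j = 0 := by
  constructor
  · intro hT
    let A := ⇑(toLpLinAlgEquiv 2 : Matrix (Fin n) (Fin n) ℂ ≃ₐ[ℂ] _) ∘ T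
    have hA : ∀ w, m + 1 ≤ w.length → FreeMonoid.lift A w = 0 := fun w hw =>
      (FreeMonoid.lift_comp_eq_zero_iff _ T w).mpr (hT w hw)
    obtain ⟨b, f, hf, hb⟩ := exists_orthonormalBasis_subordinate_flag finrank_euclideanSpace_fin
      (imageFlag_antitone A) rfl (imageFlag_eq_bot A hA)
    let U := (EuclideanSpace.basisFun (Fin n) ℂ).toBasis.toMatrix b.toBasis
    refine ⟨star U, Unitary.star_mem (OrthonormalBasis.toMatrix_orthonormalBasis_mem_unitary _ b),
      f, hf, fun k i j hij => ?_⟩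
    rw [star_star, star_basisToMatrix_mul_mul_apply]
    exact inner_apply_eq_zero_of_mem_imageFlag A k hij (hb i).2 (hb j).1
  · rintro ⟨V, hV, f, -, hVT⟩ w hw
    rw [← FreeMonoid.lift_comp_eq_zero_iff (Unitary.conjStarAlgAut ℂ _ ⟨V, hV⟩)]
    exact freeMonoidLift_eq_zero_of_strictBlockLower _ f hVT w hw
end
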